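/- arXiv:2310.01462 — 2 statements merged into one kernel-verified Lean document; each statement's English description precedes it below -/
import Mathlib

section
/- Let n ≥ 3 be a natural number and d > 0 a real. Define σ(i) = i·d for 1 ≤ i ≤ n and μ(i) = (3n - 2i - 1)·d for 1 ≤ i ≤ n - 1. Then for all 1 ≤ i ≤ n - 1: (a) μ(i) ≥ max(σ(i), σ(i+1)), and (b) σ(i) + μ(i) + σ(i+1) = 3n·d. Hence the path P_n admits a magic anti fuzzy labeling with magic constant 3n·d. -/
theorem stmt_3 (n : ℕ) (hn : 3 ≤ n) (d : ℝ) (hd : 0 < d) :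
    ∀ i : ℕ, 1 ≤ i → i ≤ n - 1 →
      (3 * (n : ℝ) - 2 * (i : ℝ) - 1) * d ≥ max ((i : ℝ) * d) (((i : ℝ) + 1) * d) ∧
      (i : ℝ) * d + (3 * (n : ℝ) - 2 * (i : ℝ) - 1) * d + ((i : ℝ) + 1) * d
        = 3 * (n : ℝ) * d := by
  intro i h1 h2
  have hi : (i : ℝ) + 1 ≤ (n : ℝ) := by
    have : i + 1 ≤ n := by omega
    exact_mod_cast this
  constructor
  · apply max_le <;> nlinarith
  · ring
end

section
/- Let n ≥ 3 odd and d > 0 real. Define on P_n: σ^P(v_i) = (2i-1)·d for odd i, σ^P(v_i) = 2i·d for even i, and μ^P(v_i v_{i+1}) = (6n - 4i - 1)·d; and σ^N = -σ^P, μ^N(v_i v_{i+1}) = (1 + 4i - 6n)·d. Then for every edge: σ^P(v_i) + μ^P(v_i v_{i+1}) + σ^P(v_{i+1}) = 6n·d and σ^N(v_i) + μ^N(v_i v_{i+1}) + σ^N(v_{i+1}) = -6n·d. -/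
theorem stmt_15 (n : ℕ) (hn : 3 ≤ n) (hodd : Odd n) (d : ℝ) (hd : 0 < d) :
    ∀ i : ℕ, 1 ≤ i → i ≤ n - 1 →
      (let σP : ℕ → ℝ := fun j => if Odd j then (2 * (j : ℝ) - 1) * d else 2 * (j : ℝ) * d
       σP i + (6 * (n : ℝ) - 4 * (i : ℝ) - 1) * d + σP (i + 1) = 6 * (n : ℝ) * d ∧
       (-(σP i)) + (1 + 4 * (i : ℝ) - 6 * (n : ℝ)) * d + (-(σP (i + 1)))
         = -(6 * (n : ℝ) * d)) := by
  intro i _ _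
  rcases Nat.even_or_odd i with h | h
  · have h1 : ¬ Odd i := Nat.not_odd_iff_even.mpr h
    have h2 : Odd (i + 1) := Even.add_one h
    simp only [h1, h2, if_true, if_false, Nat.cast_add, Nat.cast_one]
    constructor <;> ring
  · have h2 : ¬ Odd (i + 1) := by simp [Nat.odd_add_one, Nat.not_even_iff_odd]; exact h
    simp only [h, h2, if_true, if_false, Nat.cast_add, Nat.cast_one]
    constructor <;> ring
end
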